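/- arXiv:2210.00025 — 3 statements merged into one kernel-verified Lean document; each statement's English description precedes it below -/
import Mathlib

section
/- Consider a K-armed stochastic bandit with deterministic tie-breaking. Suppose the base algorithm Π satisfies IIData. Under the reward-stack model (where for each arm a and timestep t, rewards R_{a,t} are pre-sampled i.i.d. from the arm distributions), the sequence of actions taken by Artificial Replay(Π) with historical dataset H^hist equals, pointwise on every sample path, the sequence of actions taken by Full Start(Π) with the same historical dataset. Consequently the regrets of the two algorithms are equal as random variables on this coupled probability space. -/
open Finset

/-- Independence of irrelevant data for a deterministic bandit algorithm. -/
def IIData {A : Type*} (Pi : Multiset (A × ℝ) → A) : Prop :=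
  ∀ (H H' : Multiset (A × ℝ)), (∀ p ∈ H', p.1 ≠ Pi H) → Pi (H + H') = Pi H

variable {K : ℕ}

/-- Number of samples of arm `a` in a dataset. -/
def pulls (D : Multiset (Fin K × ℝ)) (a : Fin K) : ℕ :=
  Multiset.card (D.filter fun p => p.1 = a)

/-- Dataset formed by the first `u a` historical samples of each arm. -/
def usedData (hist : Fin K → List ℝ) (u : Fin K → ℕ) : Multiset (Fin K × ℝ) :=
  ∑ a : Fin K, (((hist a).take (u a)).map fun r => (a, r) : Multiset (Fin K × ℝ))

/-- Full Start online history after `t` timesteps, under the reward-stack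
model: the `k`-th pull of arm `a` yields the pre-sampled reward `R a k`. -/
def fsOnline (Pi : Multiset (Fin K × ℝ) → Fin K) (histD : Multiset (Fin K × ℝ))
    (R : Fin K → ℕ → ℝ) : ℕ → Multiset (Fin K × ℝ)
  | 0 => 0
  | t + 1 =>
    let D := fsOnline Pi histD R t
    let a := Pi (histD + D)
    D + {(a, R a (pulls D a))}

/-- The action Full Start takes at time `t`. -/
def fsAction (Pi : Multiset (Fin K × ℝ) → Fin K) (histD : Multiset (Fin K × ℝ))
    (R : Fin K → ℕ → ℝ) (t : ℕ) : Fin K :=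
  Pi (histD + fsOnline Pi histD R t)

/-- One timestep of Artificial Replay (with fuel bounding the inner while
loop): repeatedly propose `Pi(used historical data + online data)`; if the
proposed arm has an unused historical sample, consume it; otherwise play the
proposed arm online, observing the reward-stack reward.  Returns the new state
(consumption counters, online history) and the action played. -/
def arStep (Pi : Multiset (Fin K × ℝ) → Fin K) (hist : Fin K → List ℝ)
    (R : Fin K → ℕ → ℝ) :
    ℕ → (Fin K → ℕ) × Multiset (Fin K × ℝ) →
      ((Fin K → ℕ) × Multiset (Fin K × ℝ)) × Fin K
  | 0, (u, D) => ((u, D), Pi (usedData hist u + D))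
  | fuel + 1, (u, D) =>
    let a := Pi (usedData hist u + D)
    if u a < (hist a).length then
      arStep Pi hist R fuel (Function.update u a (u a + 1), D)
    else
      ((u, D + {(a, R a (pulls D a))}), a)

/-- State of Artificial Replay after `t` timesteps. -/
def arState (Pi : Multiset (Fin K × ℝ) → Fin K) (hist : Fin K → List ℝ)
    (R : Fin K → ℕ → ℝ) : ℕ → (Fin K → ℕ) × Multiset (Fin K × ℝ)
  | 0 => (fun _ => 0, 0)
  | t + 1 =>
    (arStep Pi hist R ((∑ a : Fin K, (hist a).length) + 1) (arState Pi hist R t)).1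

/-- The action Artificial Replay plays online at time `t`. -/
def arAction (Pi : Multiset (Fin K × ℝ) → Fin K) (hist : Fin K → List ℝ)
    (R : Fin K → ℕ → ℝ) (t : ℕ) : Fin K :=
  (arStep Pi hist R ((∑ a : Fin K, (hist a).length) + 1) (arState Pi hist R t)).2

/-- Regret over horizon `T` of a policy whose online history is `D`. -/
noncomputable def regretOf [NeZero K] (μ : Fin K → ℝ) (T : ℕ)
    (D : Multiset (Fin K × ℝ)) : ℝ :=
  T * (Finset.univ.sup' Finset.univ_nonempty μ) - (D.map fun p => μ p.1).sum

/-!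
At each step Artificial Replay consumes historical samples until its proposal `a` has none left.
At that point the unused historical data contains no sample of `a`, so by IIData adding it does not
change the proposal: the arm played online is the one Full Start plays on all the historical data.
The reward-stack model then makes both algorithms observe the same reward, and induction on time
gives identical online histories.
-/

section ArtificialReplay

variable (hist : Fin K → List ℝ)

def allData : Multiset (Fin K × ℝ) :=
  usedData hist fun a => (hist a).length

def unusedData (u : Fin K → ℕ) : Multiset (Fin K × ℝ) :=
  ∑ a : Fin K, (((hist a).drop (u a)).map fun r => (a, r) : Multiset (Fin K × ℝ))

def remainingCount (u : Fin K → ℕ) : ℕ :=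
  ∑ a : Fin K, ((hist a).length - u a)

theorem usedData_add_unusedData (u : Fin K → ℕ) :
    usedData hist u + unusedData hist u = allData hist := by
  rw [allData, usedData, usedData, unusedData, ← Finset.sum_add_distrib]
  refine Finset.sum_congr rfl fun a _ => ?_
  rw [List.take_length, Multiset.coe_add, ← List.map_append, List.take_append_drop]

variable {hist}

theorem lt_length_of_mem_unusedData {u : Fin K → ℕ} {p : Fin K × ℝ}
    (hp : p ∈ unusedData hist u) : u p.1 < (hist p.1).length := by
  obtain ⟨a, -, hpa⟩ := Multiset.mem_sum.1 hp
  obtain ⟨r, hr, rfl⟩ := List.mem_map.1 (Multiset.mem_coe.1 hpa)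
  simpa using List.ne_nil_of_mem hr

theorem remainingCount_update_lt {u : Fin K → ℕ} {a : Fin K} (ha : u a < (hist a).length) :
    remainingCount hist (Function.update u a (u a + 1)) < remainingCount hist u := by
  unfold remainingCount
  rw [← Finset.add_sum_erase _ _ (Finset.mem_univ a),
    ← Finset.add_sum_erase _ _ (Finset.mem_univ a), Function.update_self,
    Finset.sum_congr rfl fun b hb => by rw [Function.update_of_ne (Finset.ne_of_mem_erase hb)]]
  omega

theorem remainingCount_lt_succ_sum_length (u : Fin K → ℕ) :
    remainingCount hist u < (∑ a : Fin K, (hist a).length) + 1 :=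
  Nat.lt_succ_of_le (Finset.sum_le_sum fun _ _ => Nat.sub_le _ _)

def fsStep (Pi : Multiset (Fin K × ℝ) → Fin K) (histD : Multiset (Fin K × ℝ))
    (R : Fin K → ℕ → ℝ) (D : Multiset (Fin K × ℝ)) : Multiset (Fin K × ℝ) :=
  D + {(Pi (histD + D), R (Pi (histD + D)) (pulls D (Pi (histD + D))))}

variable {Pi : Multiset (Fin K × ℝ) → Fin K}

theorem fsOnline_succ (histD : Multiset (Fin K × ℝ)) (R : Fin K → ℕ → ℝ) (t : ℕ) :
    fsOnline Pi histD R (t + 1) = fsStep Pi histD R (fsOnline Pi histD R t) :=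
  rfl

theorem IIData.apply_allData_add (hPi : IIData Pi) {u : Fin K → ℕ} (D : Multiset (Fin K × ℝ))
    (hu : (hist (Pi (usedData hist u + D))).length ≤ u (Pi (usedData hist u + D))) :
    Pi (allData hist + D) = Pi (usedData hist u + D) := by
  rw [← usedData_add_unusedData hist u, add_right_comm]
  refine hPi _ _ fun p hp hpa => ?_
  have := lt_length_of_mem_unusedData hp
  rw [hpa] at this
  omega

/-- Each inner iteration consumes a historical sample, so `remainingCount` bounds their number. -/
theorem arStep_eq_of_remainingCount_lt (hPi : IIData Pi) (R : Fin K → ℕ → ℝ) {fuel : ℕ}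
    {u : Fin K → ℕ} (D : Multiset (Fin K × ℝ)) (hfuel : remainingCount hist u < fuel) :
    ∃ u', arStep Pi hist R fuel (u, D) =
      ((u', fsStep Pi (allData hist) R D), Pi (allData hist + D)) := by
  induction fuel generalizing u with
  | zero => omega
  | succ fuel ih =>
    by_cases hlt : u (Pi (usedData hist u + D)) < (hist (Pi (usedData hist u + D))).length
    · rw [arStep, if_pos hlt]
      exact ih (by have := remainingCount_update_lt hlt; omega)
    · rw [arStep, if_neg hlt, fsStep, hPi.apply_allData_add D (not_lt.1 hlt)]
      exact ⟨u, rfl⟩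

theorem arStep_arState (hPi : IIData Pi) (R : Fin K → ℕ → ℝ) (t : ℕ) :
    ∃ u', arStep Pi hist R ((∑ a : Fin K, (hist a).length) + 1) (arState Pi hist R t) =
      ((u', fsStep Pi (allData hist) R (arState Pi hist R t).2),
        Pi (allData hist + (arState Pi hist R t).2)) :=
  arStep_eq_of_remainingCount_lt hPi R _ (remainingCount_lt_succ_sum_length _)

theorem arState_snd_eq_fsOnline (hPi : IIData Pi) (R : Fin K → ℕ → ℝ) (t : ℕ) :
    (arState Pi hist R t).2 = fsOnline Pi (allData hist) R t := by
  induction t with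
  | zero => rfl
  | succ t ih =>
    obtain ⟨u', hstep⟩ := arStep_arState hPi R t
    rw [arState, hstep, fsOnline_succ, ih]

theorem arAction_eq_fsAction (hPi : IIData Pi) (R : Fin K → ℕ → ℝ) (t : ℕ) :
    arAction Pi hist R t = fsAction Pi (allData hist) R t := by
  obtain ⟨u', hstep⟩ := arStep_arState hPi R t
  rw [arAction, hstep, fsAction, arState_snd_eq_fsOnline hPi R t]

end ArtificialReplay

/-- Sample-path coupling: if the base algorithm `Pi` satisfies IIData, then on
every reward-stack sample path, Artificial Replay and Full Start (with the
same historical dataset) produce identical online histories and action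
sequences, and hence identical regret. -/
theorem stmt1 [NeZero K] (Pi : Multiset (Fin K × ℝ) → Fin K) (hPi : IIData Pi)
    (hist : Fin K → List ℝ) (R : Fin K → ℕ → ℝ) (μ : Fin K → ℝ) :
    (∀ t, (arState Pi hist R t).2 =
      fsOnline Pi (usedData hist fun a => (hist a).length) R t) ∧
    (∀ t, arAction Pi hist R t =
      fsAction Pi (usedData hist fun a => (hist a).length) R t) ∧
    ∀ T : ℕ, regretOf μ T ((arState Pi hist R T).2) =
      regretOf μ T (fsOnline Pi (usedData hist fun a => (hist a).length) R T) :=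
  ⟨arState_snd_eq_fsOnline hPi R, arAction_eq_fsAction hPi R,
    fun T => congrArg (regretOf μ T) (arState_snd_eq_fsOnline hPi R T)⟩
end

section
/- The Monotone UCB algorithm (MonUCB) satisfies the IIData property: if a = MonUCB(H) is the arm maximizing the monotone upper confidence index computed from dataset H (with deterministic tie-breaking), then for any additional dataset H' containing only samples of arms other than a, MonUCB(H ∪ H') = a. This follows because adding data for an arm a' ≠ a can only weakly decrease the monotone UCB index of a' and leaves the index of a unchanged. -/
theorem select_eq_of_le_of_eq_at_select {ι α : Type*} [PartialOrder ι] [Preorder α]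
    (select : (ι → α) → ι) (hmax : ∀ (v : ι → α) (b : ι), v b ≤ v (select v))
    (htie : ∀ (v : ι → α) (a : ι), (∀ b, v b ≤ v a) → select v ≤ a)
    {v w : ι → α} (hle : ∀ b, w b ≤ v b) (heq : w (select v) = v (select v)) :
    select w = select v := by
  have hmax_w : ∀ b, w b ≤ w (select v) := fun b =>
    (hle b).trans ((hmax v b).trans heq.ge)
  have hmax_v : ∀ b, v b ≤ v (select w) := fun b =>
    calc v b ≤ v (select v) := hmax v b
      _ = w (select v) := heq.symm
      _ ≤ w (select w) := hmax w _
      _ ≤ v (select w) := hle _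
  exact le_antisymm (htie w _ hmax_w) (htie v _ hmax_v)

/-- MonUCB satisfies IIData.  Each arm's monotone UCB index is a function
`index` of that arm's list of samples only, and appending further samples can
only weakly decrease the index (`hmono`).  The algorithm selects the arm with
the largest index, with deterministic tie-breaking given by the *least*
maximizer (`hmax`, `htie`).  If `a` is the arm chosen from dataset `D` and the
extra dataset `D'` contains no samples of arm `a` (`hirr`), then the chosen
arm is unchanged. -/
theorem stmt2 {K : ℕ} (index : List ℝ → ℝ)
    (hmono : ∀ (l l' : List ℝ), index (l ++ l') ≤ index l)
    (select : (Fin K → ℝ) → Fin K)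
    (hmax : ∀ (v : Fin K → ℝ) (b : Fin K), v b ≤ v (select v))
    (htie : ∀ (v : Fin K → ℝ) (a : Fin K), (∀ b, v b ≤ v a) → select v ≤ a)
    (D D' : Fin K → List ℝ)
    (hirr : D' (select fun a => index (D a)) = []) :
    select (fun a => index (D a ++ D' a)) = select (fun a => index (D a)) :=
  select_eq_of_le_of_eq_at_select select hmax htie (fun b => hmono (D b) (D' b))
    (by rw [hirr, List.append_nil])
end

section
/- Suppose a suboptimal arm a in a K-armed bandit has H_a ≥ 8 log(2TK)/Δ(a)² historical samples, for every suboptimal arm a. Then on the concentration good event, Full Start(MonUCB) never plays any suboptimal arm during the online phase: n_T(a) = 0 for all a ≠ a*. Hence the regret on the good event is 0, and the expected regret is at most Σ_a Δ(a) ≤ K. -/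
/-!
On the good event every empirical mean is within `√(2 log(2TK)/k)` of the true mean. Hence the
index of the optimal arm never drops below `μ a*`, while the index of a suboptimal arm `a`, being a
running minimum, is at most its value from the `Hₐ ≥ 8 log(2TK)/Δₐ²` historical samples, which is
at most `μ a + 2√(2 log(2TK)/Hₐ) ≤ μ a + Δₐ = μ a*`. With ties broken towards `a*`, only `a*` is
ever played, so the regret vanishes on the good event. Off it the regret is at most `T Σₐ Δₐ`, and
the good event fails with probability at most `1/T`.
-/

open MeasureTheory Finset

theorem two_mul_sqrt_le_of_div_le {L Δ m : ℝ} (hΔ : 0 < Δ) (hm : 0 ≤ m)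
    (hL : 8 * L / Δ ^ 2 ≤ m) : 2 * √(2 * L / m) ≤ Δ := by
  have h : 8 * L / m ≤ Δ ^ 2 :=
    div_le_of_le_mul₀ hm (sq_nonneg Δ) ((div_le_iff₀' (pow_pos hΔ 2)).mp hL)
  calc 2 * √(2 * L / m) = √(8 * L / m) := by
        rw [show 8 * L / m = 2 ^ 2 * (2 * L / m) by ring, Real.sqrt_mul (sq_nonneg 2),
          Real.sqrt_sq zero_le_two]
    _ ≤ √(Δ ^ 2) := Real.sqrt_le_sqrt h
    _ = Δ := Real.sqrt_sq hΔ.le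

noncomputable def ucbIndex (L : ℝ) (s : ℕ → ℝ) (m : ℕ) : ℝ :=
  if m = 0 then 1 else s m / m + √(2 * L / m)

theorem le_ucbIndex {L μ : ℝ} {s : ℕ → ℝ} {m : ℕ} (hμ : μ ≤ 1)
    (hconc : 1 ≤ m → |μ - s m / m| ≤ √(2 * L / m)) : μ ≤ ucbIndex L s m := by
  rw [ucbIndex]
  split_ifs with hm
  · exact hμ
  · linarith [(abs_le.mp (hconc (Nat.one_le_iff_ne_zero.mpr hm))).2]

theorem ucbIndex_le_add {L μ Δ : ℝ} {s : ℕ → ℝ} {m : ℕ} (hL : 0 < L) (hΔ : 0 < Δ)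
    (hm : 8 * L / Δ ^ 2 ≤ m) (hconc : 1 ≤ m → |μ - s m / m| ≤ √(2 * L / m)) :
    ucbIndex L s m ≤ μ + Δ := by
  have hm0 : m ≠ 0 := by
    rintro rfl
    exact (div_pos (mul_pos (by norm_num) hL) (pow_pos hΔ 2)).not_ge
      (by simpa using hm : 8 * L / Δ ^ 2 ≤ 0)
  rw [ucbIndex, if_neg hm0]
  linarith [(abs_le.mp (hconc (Nat.one_le_iff_ne_zero.mpr hm0))).1,
    two_mul_sqrt_le_of_div_le hΔ m.cast_nonneg hm]

theorem le_inf'_ucbIndex {L μ : ℝ} {s : ℕ → ℝ} {c : ℕ → ℕ} {H N t : ℕ} (hμ : μ ≤ 1)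
    (hc : ∀ τ, c τ ≤ τ) (ht : t < N)
    (hconc : ∀ k, 1 ≤ k → k ≤ N + H → |μ - s k / k| ≤ √(2 * L / k)) :
    μ ≤ (range (t + 1)).inf' nonempty_range_add_one fun τ => ucbIndex L s (c τ + H) := by
  refine le_inf' _ _ fun τ hτ => le_ucbIndex hμ fun hm => hconc _ hm ?_
  have hτt := mem_range.mp hτ
  have hcτ := hc τ
  omega

theorem inf'_ucbIndex_le_add {L μ Δ : ℝ} {s : ℕ → ℝ} {c : ℕ → ℕ} {H t : ℕ} (hc : c 0 = 0)
    (hL : 0 < L) (hΔ : 0 < Δ) (hH : 8 * L / Δ ^ 2 ≤ H)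
    (hconc : 1 ≤ H → |μ - s H / H| ≤ √(2 * L / H)) :
    (range (t + 1)).inf' nonempty_range_add_one (fun τ => ucbIndex L s (c τ + H)) ≤ μ + Δ := by
  -- a running minimum is at most its first term, which uses the `H` historical samples alone
  refine (inf'_le _ (mem_range.mpr t.succ_pos)).trans ?_
  rw [hc, zero_add]
  exact ucbIndex_le_add hL hΔ hH hconc

section Regret

variable {ι : Type*} (μ : ι → ℝ) (astar : ι)

def regret (T : ℕ) (A : ℕ → ι) : ℝ := T * μ astar - ∑ t ∈ range T, μ (A t)

variable {μ astar}

theorem regret_eq_zero_of_forall_eq {T : ℕ} {A : ℕ → ι} (hA : ∀ t < T, A t = astar) :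
    regret μ astar T A = 0 := by
  rw [regret, sum_congr rfl fun t ht => by rw [hA t (mem_range.mp ht)]]
  simp

theorem regret_le_mul_sum_gap [Fintype ι] (hgap : ∀ a, μ a ≤ μ astar) (T : ℕ) (A : ℕ → ι) :
    regret μ astar T A ≤ T * ∑ a, (μ astar - μ a) := by
  have hround : ∀ t, μ astar - μ (A t) ≤ ∑ a, (μ astar - μ a) := fun t =>
    single_le_sum (f := fun a => μ astar - μ a) (fun a _ => sub_nonneg.mpr (hgap a))
      (mem_univ (A t))
  calc regret μ astar T A = ∑ t ∈ range T, (μ astar - μ (A t)) := by simp [regret, sum_sub_distrib]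
    _ ≤ ∑ t ∈ range T, ∑ a, (μ astar - μ a) := sum_le_sum fun t _ => hround t
    _ = T * ∑ a, (μ astar - μ a) := by rw [sum_const, card_range, nsmul_eq_mul]

theorem sum_gap_le_card [Fintype ι] (hμ : ∀ a, μ a ∈ Set.Icc (0 : ℝ) 1) :
    ∑ a, (μ astar - μ a) ≤ Fintype.card ι := by
  have hgap : ∀ a ∈ univ, μ astar - μ a ≤ 1 := fun a _ => by linarith [(hμ astar).2, (hμ a).1]
  simpa using sum_le_card_nsmul univ _ 1 hgap

end Regret

theorem integral_le_mul_toReal_of_eq_zero_on {Ω : Type*} [MeasurableSpace Ω] {P : Measure Ω}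
    [IsProbabilityMeasure P] {f : Ω → ℝ} {E : Set Ω} {M : ℝ} {δ : ENNReal}
    (hf : Integrable f P) (hM : 0 ≤ M) (hfM : ∀ ω, f ω ≤ M) (hfE : ∀ ω ∈ E, f ω = 0)
    (hPE : 1 - δ ≤ P E) (hδ : δ ≠ ⊤) :
    ∫ ω, f ω ∂P ≤ M * δ.toReal := by
  -- `E` need not be measurable; the null-measurable set `{f ≠ 0}` stands in for its complement.
  set B := {ω | f ω = 0}ᶜ
  have hB : NullMeasurableSet B P :=
    (nullMeasurableSet_eq_fun hf.aemeasurable aemeasurable_const).compl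
  have hPB : P B ≤ δ := by
    have hsplit : P B + P Bᶜ = 1 := by rw [measure_add_measure_compl₀ hB, measure_univ]
    have hEB : P E ≤ P Bᶜ := measure_mono fun ω hω => by simpa [B] using hfE ω hω
    refine ENNReal.le_of_add_le_add_right (measure_ne_top P E) ?_
    calc P B + P E ≤ 1 := hsplit ▸ by gcongr
      _ ≤ δ + P E := by rw [add_comm]; exact tsub_le_iff_right.mp hPE
  calc ∫ ω, f ω ∂P ≤ ∫ ω, B.indicator (fun _ => M) ω ∂P := by
        refine integral_mono hf ((integrable_const M).indicator₀ hB) fun ω => ?_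
        by_cases h : f ω = 0
        · simp [B, h]
        · simp [B, h, hfM ω]
    _ = P.real B * M := by rw [integral_indicator₀ hB, setIntegral_const, smul_eq_mul]
    _ ≤ δ.toReal * M := by gcongr; exact ENNReal.toReal_mono hδ hPB
    _ = M * δ.toReal := mul_comm _ _

theorem stmt17_general {Ω : Type*} [MeasurableSpace Ω] (P : Measure Ω) [IsProbabilityMeasure P]
    {K : ℕ} (T : ℕ) (hT : 1 ≤ T)
    (μ : Fin K → ℝ) (astar : Fin K)
    (hμ : ∀ a, μ a ∈ Set.Icc (0 : ℝ) 1)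
    (hopt : ∀ a, a ≠ astar → μ a < μ astar)
    (Ha : Fin K → ℕ)
    (hH : ∀ a, a ≠ astar → 8 * Real.log (2 * T * K) / (μ astar - μ a) ^ 2 ≤ (Ha a : ℝ))
    (A : ℕ → Ω → Fin K)
    (n : ℕ → Fin K → Ω → ℕ)
    (hn : ∀ t a ω, n t a ω = ((range t).filter fun s => A s ω = a).card)
    (S : Fin K → ℕ → Ω → ℝ)
    (UCB : ℕ → Fin K → Ω → ℝ)
    (hUCB : ∀ t a ω, UCB t a ω = (range (t + 1)).inf'
      (nonempty_range_iff.mpr (Nat.succ_ne_zero t))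
      (fun τ => if n τ a ω + Ha a = 0 then 1 else
        S a (n τ a ω + Ha a) ω / (n τ a ω + Ha a) +
          Real.sqrt (2 * Real.log (2 * T * K) / (n τ a ω + Ha a))))
    (htie : ∀ ω t, t < T → A t ω ≠ astar → UCB t astar ω < UCB t (A t ω) ω)
    (E : Set Ω)
    (hE : ∀ ω ∈ E, ∀ (a : Fin K) (k : ℕ), 1 ≤ k → k ≤ T + Ha a →
      |μ a - S a k ω / k| ≤ Real.sqrt (2 * Real.log (2 * T * K) / k))
    (hPE : (1 : ENNReal) - 1 / T ≤ P E)
    (hint : Integrable (fun ω => (T : ℝ) * μ astar - ∑ t ∈ range T, μ (A t ω)) P) :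
    (∀ ω ∈ E, ∀ a, a ≠ astar → n T a ω = 0) ∧
    (∀ ω ∈ E, (T : ℝ) * μ astar - ∑ t ∈ range T, μ (A t ω) = 0) ∧
    (∫ ω, ((T : ℝ) * μ astar - ∑ t ∈ range T, μ (A t ω)) ∂P ≤
      ∑ a : Fin K, (μ astar - μ a)) ∧
    ∑ a : Fin K, (μ astar - μ a) ≤ (K : ℝ) := by
  set L := Real.log (2 * T * K)
  have hL : 0 < L := by
    have hT1 : (1 : ℝ) ≤ T := by exact_mod_cast hT
    have hK1 : (1 : ℝ) ≤ K := by exact_mod_cast astar.pos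
    exact Real.log_pos (by nlinarith)
  have hUCB' : ∀ t a ω, UCB t a ω = (range (t + 1)).inf' nonempty_range_add_one
      fun τ => ucbIndex L (S a · ω) (n τ a ω + Ha a) := by
    intro t a ω
    simp only [hUCB, ucbIndex, Nat.cast_add]
  have hplay : ∀ ω ∈ E, ∀ t < T, A t ω = astar := by
    intro ω hω t ht
    by_contra hne
    have hlow : μ astar ≤ UCB t astar ω := by
      rw [hUCB']
      exact le_inf'_ucbIndex (hμ astar).2
        (fun τ => (hn τ astar ω).trans_le ((card_filter_le _ _).trans_eq (card_range τ))) ht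
        (hE ω hω astar)
    have hup : UCB t (A t ω) ω ≤ μ astar := by
      rw [hUCB']
      exact (inf'_ucbIndex_le_add (by simp [hn]) hL (sub_pos.mpr (hopt _ hne)) (hH _ hne)
        fun hm => hE ω hω _ _ hm (Nat.le_add_left _ _)).trans_eq (add_sub_cancel _ _)
    exact (htie ω t ht hne).not_ge (hup.trans hlow)
  have hgood : ∀ ω ∈ E, regret μ astar T (A · ω) = 0 := fun ω hω =>
    regret_eq_zero_of_forall_eq (hplay ω hω)
  have hgap : ∀ a, μ a ≤ μ astar := fun a =>
    (eq_or_ne a astar).elim (fun h => h ▸ le_rfl) fun h => (hopt a h).le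
  refine ⟨fun ω hω a ha => ?_, hgood, ?_, by simpa using sum_gap_le_card hμ⟩
  · rw [hn, card_eq_zero, filter_eq_empty_iff]
    exact fun s hs h => ha (h.symm.trans (hplay ω hω s (mem_range.mp hs)))
  · have hT0 : (T : ENNReal) ≠ 0 := by exact_mod_cast (by omega : T ≠ 0)
    calc ∫ ω, regret μ astar T (A · ω) ∂P
        ≤ (T * ∑ a, (μ astar - μ a)) * (1 / T : ENNReal).toReal :=
          integral_le_mul_toReal_of_eq_zero_on hint
            (mul_nonneg T.cast_nonneg (sum_nonneg fun a _ => sub_nonneg.mpr (hgap a)))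
            (fun ω => regret_le_mul_sum_gap hgap T _) hgood hPE (by simpa using hT0)
      _ = ∑ a, (μ astar - μ a) := by
          rw [ENNReal.toReal_div, ENNReal.toReal_one, ENNReal.toReal_natCast]
          field_simp

open MeasureTheory Finset in
/-- If every suboptimal arm `a` has `Ha a ≥ 8 log(2TK)/Δ(a)²` historical
samples, then on the concentration good event `E`, Full Start(MonUCB) (whose
index for arm `a` after `k` online pulls uses `k + Ha a` total samples, with
strict selection `htie` breaking ties in favor of `a*`) never plays any
suboptimal arm online: `n_T(a) = 0`.  Hence the regret on `E` is `0`, and the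
expected regret is at most `Σ_a Δ(a) ≤ K`. -/
theorem stmt17 {Ω : Type*} [MeasurableSpace Ω] (P : Measure Ω) [IsProbabilityMeasure P]
    {K : ℕ} [NeZero K] (T : ℕ) (hT : 1 ≤ T)
    (μ : Fin K → ℝ) (astar : Fin K)
    (hμ : ∀ a, μ a ∈ Set.Icc (0 : ℝ) 1)
    (hopt : ∀ a, a ≠ astar → μ a < μ astar)
    (Ha : Fin K → ℕ)
    (hH : ∀ a, a ≠ astar → 8 * Real.log (2 * T * K) / (μ astar - μ a) ^ 2 ≤ (Ha a : ℝ))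
    (A : ℕ → Ω → Fin K)
    (n : ℕ → Fin K → Ω → ℕ)
    (hn : ∀ t a ω, n t a ω = ((range t).filter fun s => A s ω = a).card)
    (S : Fin K → ℕ → Ω → ℝ)
    (UCB : ℕ → Fin K → Ω → ℝ)
    (hUCB : ∀ t a ω, UCB t a ω = (range (t + 1)).inf'
      (nonempty_range_iff.mpr (Nat.succ_ne_zero t))
      (fun τ => if n τ a ω + Ha a = 0 then 1 else
        S a (n τ a ω + Ha a) ω / (n τ a ω + Ha a) +
          Real.sqrt (2 * Real.log (2 * T * K) / (n τ a ω + Ha a))))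
    (halg : ∀ ω t, t < T → ∀ b, UCB t b ω ≤ UCB t (A t ω) ω)
    (htie : ∀ ω t, t < T → A t ω ≠ astar → UCB t astar ω < UCB t (A t ω) ω)
    (E : Set Ω)
    (hE : ∀ ω ∈ E, ∀ (a : Fin K) (k : ℕ), 1 ≤ k → k ≤ T + Ha a →
      |μ a - S a k ω / k| ≤ Real.sqrt (2 * Real.log (2 * T * K) / k))
    (hPE : (1 : ENNReal) - 1 / T ≤ P E)
    (hint : Integrable (fun ω => (T : ℝ) * μ astar - ∑ t ∈ range T, μ (A t ω)) P) :
    (∀ ω ∈ E, ∀ a, a ≠ astar → n T a ω = 0) ∧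
    (∀ ω ∈ E, (T : ℝ) * μ astar - ∑ t ∈ range T, μ (A t ω) = 0) ∧
    (∫ ω, ((T : ℝ) * μ astar - ∑ t ∈ range T, μ (A t ω)) ∂P ≤
      ∑ a : Fin K, (μ astar - μ a)) ∧
    ∑ a : Fin K, (μ astar - μ a) ≤ (K : ℝ) :=
  stmt17_general P T hT μ astar hμ hopt Ha hH A n hn S UCB hUCB htie E hE hPE hint
end
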